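/- arXiv:2001.07981 — 4 statements merged into one kernel-verified Lean document; each statement's English description precedes it below -/
import Mathlib

section
/- Let H be a finite-dimensional Hilbert space, M ⊆ N von Neumann subalgebras of B(H), σ a full-rank state on M, and E : N → M a conditional expectation with respect to σ (i.e. E is a contraction, acts as the identity on M, and preserves the expectation Tr[σ ·]). Then for all X ∈ N and all Y, Z ∈ M one has E[Y X Z] = Y E[X] Z (the M-bimodule property). -/
set_option maxHeartbeats 1000000

open Matrix ComplexOrder
open scoped Matrix.Norms.L2Operator

noncomputable section

variable {d : ℕ}

private lemma proj_norm_le_one {p : Matrix (Fin d) (Fin d) ℂ}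
    (hp2 : p * p = p) (hps : pᴴ = p) : ‖p‖ ≤ 1 := by
  have h := Matrix.l2_opNorm_conjTranspose_mul_self p
  rw [hps, hp2] at h
  nlinarith [norm_nonneg p]

/-- Tomiyama step, right-handed: `E (X * (1-p)) * p = 0` for projections `p ∈ M`. -/
private lemma tomiyama_step_right
    (M N : StarSubalgebra ℂ (Matrix (Fin d) (Fin d) ℂ)) (hMN : M ≤ N)
    (E : Matrix (Fin d) (Fin d) ℂ →ₗ[ℂ] Matrix (Fin d) (Fin d) ℂ)
    (hrange : ∀ X ∈ N, E X ∈ M)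
    (hcontr : ∀ X ∈ N, ‖E X‖ ≤ ‖X‖)
    (hid : ∀ X ∈ M, E X = X)
    (X : Matrix (Fin d) (Fin d) ℂ) (hX : X ∈ N)
    (p : Matrix (Fin d) (Fin d) ℂ) (hpM : p ∈ M) (hp2 : p * p = p) (hps : pᴴ = p) :
    E (X * (1 - p)) * p = 0 := by
  set q : Matrix (Fin d) (Fin d) ℂ := 1 - p with hq
  have hq2 : q * q = q := by
    have : q * q = 1 - p - p + p * p := by rw [hq]; noncomm_ring
    rw [this, hp2, hq]; noncomm_ring
  have hqs : qᴴ = q := by rw [hq, conjTranspose_sub, conjTranspose_one, hps]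
  have hqp : q * p = 0 := by rw [hq, sub_mul, one_mul, hp2, sub_self]
  have hpq : p * q = 0 := by rw [hq, mul_sub, mul_one, hp2, sub_self]
  have hqM : q ∈ M := M.sub_mem M.one_mem hpM
  have hXqN : X * q ∈ N := N.mul_mem hX (hMN hqM)
  set y : Matrix (Fin d) (Fin d) ℂ := E (X * q) * p with hy
  have hyM : y ∈ M := M.mul_mem (hrange _ hXqN) hpM
  have hyp : y * p = y := by rw [hy, mul_assoc, hp2]
  -- the key inequality for each n
  have key : ∀ n : ℕ, ((n : ℝ) + 1) ^ 2 * ‖y‖ ^ 2 ≤ ‖X‖ ^ 2 + (n : ℝ) ^ 2 * ‖y‖ ^ 2 := by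
    intro n
    set c : Matrix (Fin d) (Fin d) ℂ := X * q + (n : ℂ) • y with hc
    have hcN : c ∈ N := N.add_mem hXqN (N.smul_mem (hMN hyM) _)
    have hEc : E c = E (X * q) + (n : ℂ) • y := by
      rw [hc, map_add, LinearMap.map_smul, hid y hyM]
    have hEcp : E c * p = ((n : ℂ) + 1) • y := by
      rw [hEc, add_mul, smul_mul_assoc, hyp, ← hy]
      rw [add_smul, one_smul, add_comm]
    -- norm of E c * p
    have h1 : ((n : ℝ) + 1) * ‖y‖ ≤ ‖c‖ := by
      have e1 : ‖E c * p‖ = ((n : ℝ) + 1) * ‖y‖ := by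
        rw [hEcp, norm_smul]
        congr 1
        rw [show ((n : ℂ) + 1) = (((n : ℝ) + 1 : ℝ) : ℂ) by push_cast; ring,
          Complex.norm_real, Real.norm_eq_abs, abs_of_nonneg (by positivity)]
      have e2 : ‖E c * p‖ ≤ ‖E c‖ * ‖p‖ := Matrix.l2_opNorm_mul _ _
      have e3 : ‖E c‖ ≤ ‖c‖ := hcontr c hcN
      have e4 : ‖p‖ ≤ 1 := proj_norm_le_one hp2 hps
      nlinarith [norm_nonneg (E c), norm_nonneg c]
    -- c * cᴴ
    have hyd : yᴴ = p * (E (X * q))ᴴ := by rw [hy, conjTranspose_mul, hps]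
    have hcc : c * cᴴ = X * (q * Xᴴ) + ((n : ℂ) * (n : ℂ)) • (y * yᴴ) := by
      have hcd : cᴴ = q * Xᴴ + (n : ℂ) • yᴴ := by
        rw [hc, conjTranspose_add, conjTranspose_mul, hqs, conjTranspose_smul]
        congr 2
        simp
      rw [hc, hcd]
      rw [add_mul, mul_add, mul_add, smul_mul_assoc, smul_mul_assoc,
        mul_smul_comm, mul_smul_comm, smul_smul]
      have c1 : X * q * (q * Xᴴ) = X * (q * Xᴴ) := by
        rw [mul_assoc, ← mul_assoc q q, hq2]
      have c2 : X * q * yᴴ = 0 := by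
        rw [hyd, mul_assoc, ← mul_assoc q p, hqp, zero_mul, mul_zero]
      have c3 : y * (q * Xᴴ) = 0 := by
        rw [hy, mul_assoc, ← mul_assoc p q, hpq, zero_mul, mul_zero]
      rw [c1, c2, c3, smul_zero]
      abel
    -- norm of c squared
    have h2 : ‖c‖ ^ 2 ≤ ‖X‖ ^ 2 + (n : ℝ) ^ 2 * ‖y‖ ^ 2 := by
      have e0 : ‖c * cᴴ‖ = ‖c‖ ^ 2 := by
        have := Matrix.l2_opNorm_conjTranspose_mul_self cᴴ
        rw [conjTranspose_conjTranspose, Matrix.l2_opNorm_conjTranspose] at this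
        rw [this]; ring
      have e1 : ‖y * yᴴ‖ = ‖y‖ ^ 2 := by
        have := Matrix.l2_opNorm_conjTranspose_mul_self yᴴ
        rw [conjTranspose_conjTranspose, Matrix.l2_opNorm_conjTranspose] at this
        rw [this]; ring
      have e2 : ‖X * (q * Xᴴ)‖ ≤ ‖X‖ ^ 2 := by
        have f1 : ‖X * (q * Xᴴ)‖ ≤ ‖X‖ * ‖q * Xᴴ‖ := Matrix.l2_opNorm_mul _ _
        have f2 : ‖q * Xᴴ‖ ≤ ‖q‖ * ‖Xᴴ‖ := Matrix.l2_opNorm_mul _ _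
        have f3 : ‖q‖ ≤ 1 := proj_norm_le_one hq2 hqs
        have f4 : ‖Xᴴ‖ = ‖X‖ := Matrix.l2_opNorm_conjTranspose X
        have f5 := mul_le_mul_of_nonneg_left f2 (norm_nonneg X)
        calc ‖X * (q * Xᴴ)‖ ≤ ‖X‖ * ‖q * Xᴴ‖ := f1
          _ ≤ ‖X‖ * (‖q‖ * ‖Xᴴ‖) := f5
          _ = ‖q‖ * (‖X‖ * ‖X‖) := by rw [f4]; ring
          _ ≤ 1 * (‖X‖ * ‖X‖) :=
              mul_le_mul_of_nonneg_right f3 (mul_nonneg (norm_nonneg X) (norm_nonneg X))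
          _ = ‖X‖ ^ 2 := by ring
      have hns : ‖((n : ℂ) * (n : ℂ)) • (y * yᴴ)‖ = (n : ℝ) ^ 2 * ‖y * yᴴ‖ := by
        rw [norm_smul]
        congr 1
        rw [show ((n : ℂ) * (n : ℂ)) = (((n : ℝ) ^ 2 : ℝ) : ℂ) by push_cast; ring,
          Complex.norm_real, Real.norm_eq_abs, abs_of_nonneg (by positivity)]
      have e3 : ‖c * cᴴ‖ ≤ ‖X * (q * Xᴴ)‖ + (n : ℝ) ^ 2 * ‖y * yᴴ‖ := by
        rw [hcc]
        refine le_trans (norm_add_le _ _) ?_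
        rw [hns]
      nlinarith [e0, e1, e2, e3]
    have hsq := mul_self_le_mul_self (by positivity : (0:ℝ) ≤ ((n : ℝ) + 1) * ‖y‖) h1
    nlinarith [norm_nonneg y, norm_nonneg c, h2, hsq]
  -- conclude y = 0
  have hy0 : y = 0 := by
    by_contra hne
    have hy' : 0 < ‖y‖ := norm_pos_iff.mpr hne
    have hpos : 0 < ‖y‖ ^ 2 := by positivity
    obtain ⟨n, hn⟩ := exists_nat_gt (‖X‖ ^ 2 / ‖y‖ ^ 2)
    have := key n
    have : (2 * (n:ℝ) + 1) * ‖y‖ ^ 2 ≤ ‖X‖ ^ 2 := by nlinarith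
    have h2 : ‖X‖ ^ 2 < (n : ℝ) * ‖y‖ ^ 2 := by
      rw [div_lt_iff₀ hpos] at hn; linarith
    nlinarith
  exact hy0

end

noncomputable section LeftStep

/-- Tomiyama step, left-handed: `p * E ((1-p) * X) = 0` for projections `p ∈ M`. -/
private lemma tomiyama_step_left
    (M N : StarSubalgebra ℂ (Matrix (Fin d) (Fin d) ℂ)) (hMN : M ≤ N)
    (E : Matrix (Fin d) (Fin d) ℂ →ₗ[ℂ] Matrix (Fin d) (Fin d) ℂ)
    (hrange : ∀ X ∈ N, E X ∈ M)
    (hcontr : ∀ X ∈ N, ‖E X‖ ≤ ‖X‖)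
    (hid : ∀ X ∈ M, E X = X)
    (X : Matrix (Fin d) (Fin d) ℂ) (hX : X ∈ N)
    (p : Matrix (Fin d) (Fin d) ℂ) (hpM : p ∈ M) (hp2 : p * p = p) (hps : pᴴ = p) :
    p * E ((1 - p) * X) = 0 := by
  set q : Matrix (Fin d) (Fin d) ℂ := 1 - p with hq
  have hq2 : q * q = q := by
    have : q * q = 1 - p - p + p * p := by rw [hq]; noncomm_ring
    rw [this, hp2, hq]; noncomm_ring
  have hqs : qᴴ = q := by rw [hq, conjTranspose_sub, conjTranspose_one, hps]
  have hqp : q * p = 0 := by rw [hq, sub_mul, one_mul, hp2, sub_self]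
  have hpq : p * q = 0 := by rw [hq, mul_sub, mul_one, hp2, sub_self]
  have hqM : q ∈ M := M.sub_mem M.one_mem hpM
  have hXqN : q * X ∈ N := N.mul_mem (hMN hqM) hX
  set y : Matrix (Fin d) (Fin d) ℂ := p * E (q * X) with hy
  have hyM : y ∈ M := M.mul_mem hpM (hrange _ hXqN)
  have hyp : p * y = y := by rw [hy, ← mul_assoc, hp2]
  have key : ∀ n : ℕ, ((n : ℝ) + 1) ^ 2 * ‖y‖ ^ 2 ≤ ‖X‖ ^ 2 + (n : ℝ) ^ 2 * ‖y‖ ^ 2 := by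
    intro n
    set c : Matrix (Fin d) (Fin d) ℂ := q * X + (n : ℂ) • y with hc
    have hcN : c ∈ N := N.add_mem hXqN (N.smul_mem (hMN hyM) _)
    have hEc : E c = E (q * X) + (n : ℂ) • y := by
      rw [hc, map_add, LinearMap.map_smul, hid y hyM]
    have hEcp : p * E c = ((n : ℂ) + 1) • y := by
      rw [hEc, mul_add, mul_smul_comm, hyp, ← hy]
      rw [add_smul, one_smul, add_comm]
    have h1 : ((n : ℝ) + 1) * ‖y‖ ≤ ‖c‖ := by
      have e1 : ‖p * E c‖ = ((n : ℝ) + 1) * ‖y‖ := by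
        rw [hEcp, norm_smul]
        congr 1
        rw [show ((n : ℂ) + 1) = (((n : ℝ) + 1 : ℝ) : ℂ) by push_cast; ring,
          Complex.norm_real, Real.norm_eq_abs, abs_of_nonneg (by positivity)]
      have e2 : ‖p * E c‖ ≤ ‖p‖ * ‖E c‖ := Matrix.l2_opNorm_mul _ _
      have e3 : ‖E c‖ ≤ ‖c‖ := hcontr c hcN
      have e4 : ‖p‖ ≤ 1 := proj_norm_le_one hp2 hps
      nlinarith [norm_nonneg (E c), norm_nonneg c]
    have hyd : yᴴ = (E (q * X))ᴴ * p := by rw [hy, conjTranspose_mul, hps]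
    have hcc : cᴴ * c = Xᴴ * (q * X) + ((n : ℂ) * (n : ℂ)) • (yᴴ * y) := by
      have hcd : cᴴ = Xᴴ * q + (n : ℂ) • yᴴ := by
        rw [hc, conjTranspose_add, conjTranspose_mul, hqs, conjTranspose_smul]
        congr 2
        simp
      rw [hc, hcd]
      rw [add_mul, mul_add, mul_add, smul_mul_assoc, smul_mul_assoc,
        mul_smul_comm, mul_smul_comm, smul_smul]
      have c1 : Xᴴ * q * (q * X) = Xᴴ * (q * X) := by
        rw [mul_assoc, ← mul_assoc q q, hq2]
      have c2 : Xᴴ * q * y = 0 := by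
        rw [hy, mul_assoc, ← mul_assoc q p, hqp, zero_mul, mul_zero]
      have c3 : yᴴ * (q * X) = 0 := by
        rw [hyd, mul_assoc, ← mul_assoc p q, hpq, zero_mul, mul_zero]
      rw [c1, c2, c3, smul_zero]
      abel
    have h2 : ‖c‖ ^ 2 ≤ ‖X‖ ^ 2 + (n : ℝ) ^ 2 * ‖y‖ ^ 2 := by
      have e0 : ‖cᴴ * c‖ = ‖c‖ ^ 2 := by
        have := Matrix.l2_opNorm_conjTranspose_mul_self c
        rw [this]; ring
      have e1 : ‖yᴴ * y‖ = ‖y‖ ^ 2 := by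
        have := Matrix.l2_opNorm_conjTranspose_mul_self y
        rw [this]; ring
      have e2 : ‖Xᴴ * (q * X)‖ ≤ ‖X‖ ^ 2 := by
        have f1 : ‖Xᴴ * (q * X)‖ ≤ ‖Xᴴ‖ * ‖q * X‖ := Matrix.l2_opNorm_mul _ _
        have f2 : ‖q * X‖ ≤ ‖q‖ * ‖X‖ := Matrix.l2_opNorm_mul _ _
        have f3 : ‖q‖ ≤ 1 := proj_norm_le_one hq2 hqs
        have f4 : ‖Xᴴ‖ = ‖X‖ := Matrix.l2_opNorm_conjTranspose X
        have f5 := mul_le_mul_of_nonneg_left f2 (norm_nonneg Xᴴ)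
        calc ‖Xᴴ * (q * X)‖ ≤ ‖Xᴴ‖ * ‖q * X‖ := f1
          _ ≤ ‖Xᴴ‖ * (‖q‖ * ‖X‖) := f5
          _ = ‖q‖ * (‖X‖ * ‖X‖) := by rw [f4]; ring
          _ ≤ 1 * (‖X‖ * ‖X‖) :=
              mul_le_mul_of_nonneg_right f3 (mul_nonneg (norm_nonneg X) (norm_nonneg X))
          _ = ‖X‖ ^ 2 := by ring
      have hns : ‖((n : ℂ) * (n : ℂ)) • (yᴴ * y)‖ = (n : ℝ) ^ 2 * ‖yᴴ * y‖ := by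
        rw [norm_smul]
        congr 1
        rw [show ((n : ℂ) * (n : ℂ)) = (((n : ℝ) ^ 2 : ℝ) : ℂ) by push_cast; ring,
          Complex.norm_real, Real.norm_eq_abs, abs_of_nonneg (by positivity)]
      have e3 : ‖cᴴ * c‖ ≤ ‖Xᴴ * (q * X)‖ + (n : ℝ) ^ 2 * ‖yᴴ * y‖ := by
        rw [hcc]
        refine le_trans (norm_add_le _ _) ?_
        rw [hns]
      nlinarith [e0, e1, e2, e3]
    have hsq := mul_self_le_mul_self (by positivity : (0:ℝ) ≤ ((n : ℝ) + 1) * ‖y‖) h1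
    nlinarith [norm_nonneg y, norm_nonneg c, h2, hsq]
  have hy0 : y = 0 := by
    by_contra hne
    have hy' : 0 < ‖y‖ := norm_pos_iff.mpr hne
    have hpos : 0 < ‖y‖ ^ 2 := by positivity
    obtain ⟨n, hn⟩ := exists_nat_gt (‖X‖ ^ 2 / ‖y‖ ^ 2)
    have := key n
    have : (2 * (n:ℝ) + 1) * ‖y‖ ^ 2 ≤ ‖X‖ ^ 2 := by nlinarith
    have h2 : ‖X‖ ^ 2 < (n : ℝ) * ‖y‖ ^ 2 := by
      rw [div_lt_iff₀ hpos] at hn; linarith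
    nlinarith
  exact hy0

end LeftStep

section Modules

variable (M N : StarSubalgebra ℂ (Matrix (Fin d) (Fin d) ℂ)) (hMN : M ≤ N)
    (E : Matrix (Fin d) (Fin d) ℂ →ₗ[ℂ] Matrix (Fin d) (Fin d) ℂ)
    (hrange : ∀ X ∈ N, E X ∈ M)
    (hcontr : ∀ X ∈ N, ‖E X‖ ≤ ‖X‖)
    (hid : ∀ X ∈ M, E X = X)

include hMN hrange hcontr hid in
private lemma proj_left_module
    (X : Matrix (Fin d) (Fin d) ℂ) (hX : X ∈ N)
    (r : Matrix (Fin d) (Fin d) ℂ) (hrM : r ∈ M) (hr2 : r * r = r) (hrs : rᴴ = r) :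
    E (r * X) = r * E X := by
  have hr'M : (1 : Matrix (Fin d) (Fin d) ℂ) - r ∈ M := M.sub_mem M.one_mem hrM
  have hr'2 : (1 - r) * (1 - r) = 1 - r := by
    have : (1 - r) * (1 - r) = 1 - r - r + r * r := by noncomm_ring
    rw [this, hr2]; noncomm_ring
  have hr's : (1 - r)ᴴ = 1 - r := by rw [conjTranspose_sub, conjTranspose_one, hrs]
  have hA := tomiyama_step_left M N hMN E hrange hcontr hid X hX r hrM hr2 hrs
  have hB := tomiyama_step_left M N hMN E hrange hcontr hid X hX (1 - r) hr'M hr'2 hr's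
  rw [sub_sub_cancel] at hB
  -- hA : r * E ((1 - r) * X) = 0 ; hB : (1 - r) * E (r * X) = 0
  have hA' : r * E X = r * E (r * X) := by
    have : (1 - r) * X = X - r * X := by noncomm_ring
    rw [this, map_sub, mul_sub, sub_eq_zero] at hA
    exact hA
  have hB' : E (r * X) = r * E (r * X) := by
    rw [sub_mul, one_mul, sub_eq_zero] at hB
    exact hB
  rw [hB', ← hA']

include hMN hrange hcontr hid in
private lemma proj_right_module
    (X : Matrix (Fin d) (Fin d) ℂ) (hX : X ∈ N)
    (r : Matrix (Fin d) (Fin d) ℂ) (hrM : r ∈ M) (hr2 : r * r = r) (hrs : rᴴ = r) :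
    E (X * r) = E X * r := by
  have hr'M : (1 : Matrix (Fin d) (Fin d) ℂ) - r ∈ M := M.sub_mem M.one_mem hrM
  have hr'2 : (1 - r) * (1 - r) = 1 - r := by
    have : (1 - r) * (1 - r) = 1 - r - r + r * r := by noncomm_ring
    rw [this, hr2]; noncomm_ring
  have hr's : (1 - r)ᴴ = 1 - r := by rw [conjTranspose_sub, conjTranspose_one, hrs]
  have hA := tomiyama_step_right M N hMN E hrange hcontr hid X hX r hrM hr2 hrs
  have hB := tomiyama_step_right M N hMN E hrange hcontr hid X hX (1 - r) hr'M hr'2 hr's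
  rw [sub_sub_cancel] at hB
  have hA' : E X * r = E (X * r) * r := by
    have : X * (1 - r) = X - X * r := by noncomm_ring
    rw [this, map_sub, sub_mul, sub_eq_zero] at hA
    exact hA
  have hB' : E (X * r) = E (X * r) * r := by
    rw [mul_sub, mul_one, sub_eq_zero] at hB
    exact hB
  rw [hB', ← hA']

end Modules

/-- Every element of a star subalgebra lies in any `ℂ`-submodule containing all the
Hermitian idempotents of the star subalgebra. -/
private lemma mem_of_proj_mem
    (M : StarSubalgebra ℂ (Matrix (Fin d) (Fin d) ℂ))
    (S : Submodule ℂ (Matrix (Fin d) (Fin d) ℂ))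
    (hproj : ∀ r ∈ M, r * r = r → rᴴ = r → r ∈ S) :
    ∀ Y ∈ M, Y ∈ S := by
  -- first: Hermitian elements
  have herm : ∀ A ∈ M, Aᴴ = A → A ∈ S := by
    intro A hAM hAh
    have hA : A.IsHermitian := hAh
    set ev : Fin d → ℝ := hA.eigenvalues with hev
    set U : Matrix (Fin d) (Fin d) ℂ := (hA.eigenvectorUnitary : Matrix (Fin d) (Fin d) ℂ)
      with hU
    have hU1 : star U * U = 1 := Matrix.UnitaryGroup.star_mul_self _
    have hU2 : U * star U = 1 := by
      rw [mul_eq_one_comm.mpr hU1]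
    -- conjugation algebra homomorphism
    let φ : Matrix (Fin d) (Fin d) ℂ →ₐ[ℂ] Matrix (Fin d) (Fin d) ℂ :=
      { toFun := fun B => U * B * star U
        map_one' := by show U * 1 * star U = 1; rw [mul_one, hU2]
        map_mul' := by
          intro a b
          show U * (a * b) * star U = U * a * star U * (U * b * star U)
          have h : U * a * star U * (U * b * star U) = U * a * (star U * U) * b * star U := by
            noncomm_ring
          rw [h, hU1, mul_one]
          noncomm_ring
        map_zero' := by show U * 0 * star U = 0; simp
        map_add' := by
          intro a b
          show U * (a + b) * star U = U * a * star U + U * b * star U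
          noncomm_ring
        commutes' := by
          intro r
          show U * algebraMap ℂ (Matrix (Fin d) (Fin d) ℂ) r * star U = _
          simp only [Algebra.algebraMap_eq_smul_one]
          rw [mul_smul_comm, mul_one, smul_mul_assoc, hU2] }
    have hφdef : ∀ B, φ B = U * B * star U := fun _ => rfl
    -- spectral theorem
    have hspec : A = φ (Matrix.diagonal (fun i => (ev i : ℂ))) := by
      have := hA.spectral_theorem
      rw [Unitary.conjStarAlgAut_apply] at this
      rw [hφdef]
      exact this
    -- aeval of A
    have haeval : ∀ g : Polynomial ℂ,
        Polynomial.aeval A g = φ (Matrix.diagonal (fun i => g.eval (ev i : ℂ))) := by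
      intro g
      have h1 : A = φ ((Matrix.diagonalAlgHom ℂ) (fun i => (ev i : ℂ))) := hspec
      rw [h1, Polynomial.aeval_algHom_apply, Polynomial.aeval_algHom_apply]
      refine congrArg φ ?_
      rw [Matrix.diagonalAlgHom_apply]
      refine congrArg Matrix.diagonal ?_
      funext i
      rw [Polynomial.aeval_fn_apply]
      simp
    -- finset of eigenvalues
    set s : Finset ℝ := Finset.image ev Finset.univ with hs
    have hinj : Set.InjOn (fun t : ℝ => (t : ℂ)) ↑s := fun a _ b _ hab =>
      Complex.ofReal_injective hab
    -- projections
    set P : ℝ → Matrix (Fin d) (Fin d) ℂ :=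
      fun t => Polynomial.aeval A (Lagrange.basis s (fun x : ℝ => (x : ℂ)) t) with hP
    have hPdiag : ∀ t ∈ s, P t = φ (Matrix.diagonal
        (fun i => if ev i = t then (1 : ℂ) else 0)) := by
      intro t ht
      rw [hP]
      simp only
      rw [haeval]
      refine congrArg φ ?_
      refine congrArg Matrix.diagonal ?_
      funext i
      by_cases h : ev i = t
      · subst h
        rw [if_pos rfl]
        exact Lagrange.eval_basis_self hinj ht
      · rw [if_neg h]
        exact Lagrange.eval_basis_of_ne (fun hte => h hte.symm)
          (Finset.mem_image_of_mem ev (Finset.mem_univ i))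
    -- membership of the spectral projections in M
    have hPM : ∀ t : ℝ, P t ∈ M := by
      intro t
      rw [hP]
      simp only
      set g := Lagrange.basis s (fun x : ℝ => (x : ℂ)) t with hg
      have h := Polynomial.aeval_subalgebra_coe g M.toSubalgebra ⟨A, hAM⟩
      rw [← h]
      exact (Polynomial.aeval (⟨A, hAM⟩ : M.toSubalgebra) g).2
    -- idempotency
    have hP2 : ∀ t ∈ s, P t * P t = P t := by
      intro t ht
      rw [hPdiag t ht, ← _root_.map_mul, Matrix.diagonal_mul_diagonal]
      refine congrArg φ (congrArg Matrix.diagonal ?_)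
      funext i
      by_cases h : ev i = t <;> simp [h]
    -- hermitian
    have hDconj : ∀ t : ℝ, (Matrix.diagonal (fun i => if ev i = t then (1:ℂ) else 0))ᴴ
        = Matrix.diagonal (fun i => if ev i = t then (1:ℂ) else 0) := by
      intro t
      rw [Matrix.diagonal_conjTranspose]
      refine congrArg Matrix.diagonal ?_
      funext i
      by_cases h : ev i = t <;> simp [h, Pi.star_apply]
    have hPh : ∀ t ∈ s, (P t)ᴴ = P t := by
      intro t ht
      rw [hPdiag t ht, hφdef, Matrix.star_eq_conjTranspose]
      rw [conjTranspose_mul, conjTranspose_mul, conjTranspose_conjTranspose, hDconj,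
        ← mul_assoc]
    -- spectral sum
    have hsum : ∑ t ∈ s, (t : ℂ) • P t = A := by
      have e1 : ∀ t ∈ s, (t : ℂ) • P t
          = φ (Matrix.diagonal (fun i => if ev i = t then (t : ℂ) else 0)) := by
        intro t ht
        rw [hPdiag t ht, ← _root_.map_smul φ, ← Matrix.diagonal_smul]
        refine congrArg φ (congrArg Matrix.diagonal ?_)
        funext i
        by_cases h : ev i = t <;> simp [h]
      rw [Finset.sum_congr rfl e1, ← _root_.map_sum]
      have e2 : ∑ t ∈ s, Matrix.diagonal (fun i => if ev i = t then (t : ℂ) else 0)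
          = Matrix.diagonal (fun i => (ev i : ℂ)) := by
        have e3 := (_root_.map_sum (Matrix.diagonalAlgHom (n := Fin d) (α := ℂ) ℂ)
          (fun t => fun i => if ev i = t then (t : ℂ) else 0) s).symm
        simp only [Matrix.diagonalAlgHom_apply] at e3
        rw [e3]
        refine congrArg Matrix.diagonal ?_
        funext i
        rw [Finset.sum_apply]
        rw [Finset.sum_ite_eq s (ev i) (fun t => (t : ℂ))]
        rw [if_pos (Finset.mem_image_of_mem ev (Finset.mem_univ i))]
      rw [e2, ← hspec]
    rw [← hsum]
    exact Submodule.sum_mem S fun t ht =>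
      Submodule.smul_mem S _ (hproj (P t) (hPM t) (hP2 t ht) (hPh t ht))
  -- general elements via Hermitian decomposition
  intro Y hYM
  have hYs : Yᴴ ∈ M := by
    have := M.star_mem' hYM
    rwa [Matrix.star_eq_conjTranspose] at this
  set A : Matrix (Fin d) (Fin d) ℂ := ((1 : ℂ)/2) • (Y + Yᴴ) with hA
  set B : Matrix (Fin d) (Fin d) ℂ := (Complex.I/2) • (Yᴴ - Y) with hB
  have hAM : A ∈ M := M.smul_mem (M.add_mem hYM hYs) _
  have hBM : B ∈ M := M.smul_mem (M.sub_mem hYs hYM) _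
  have hAh : Aᴴ = A := by
    rw [hA, conjTranspose_smul, conjTranspose_add, conjTranspose_conjTranspose]
    rw [add_comm]
    congr 1
    simp [Complex.ext_iff]
  have hBh : Bᴴ = B := by
    rw [hB, conjTranspose_smul, conjTranspose_sub, conjTranspose_conjTranspose]
    rw [show star (Complex.I/2) = -(Complex.I/2) from by
      simp [Complex.ext_iff]; norm_num]
    rw [neg_smul, ← smul_neg, neg_sub]
  have hdecomp : Y = A + Complex.I • B := by
    have hIB : Complex.I • B = ((1:ℂ)/2) • (Y - Yᴴ) := by
      rw [hB, smul_smul]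
      rw [show Complex.I * (Complex.I/2) = -((1:ℂ)/2) by
        rw [div_eq_mul_inv, ← mul_assoc, Complex.I_mul_I]; norm_num]
      rw [neg_smul, ← smul_neg, neg_sub]
    rw [hIB, hA]
    module
  rw [hdecomp]
  exact S.add_mem (herm A hAM hAh) (S.smul_mem _ (herm B hBM hBh))

/-- A conditional expectation (contraction, identity on `M`, preserving the
state `Tr[σ ·]`) from `N` onto `M ⊆ N` satisfies the `M`-bimodule property:
`E[Y X Z] = Y E[X] Z` for all `X ∈ N` and `Y, Z ∈ M`. -/
theorem conditional_expectation_bimodule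
    {d : ℕ} (M N : StarSubalgebra ℂ (Matrix (Fin d) (Fin d) ℂ))
    (hMN : M ≤ N)
    (σ : Matrix (Fin d) (Fin d) ℂ) (hσ : σ.PosDef) (hσtr : σ.trace = 1) (hσM : σ ∈ M)
    (E : Matrix (Fin d) (Fin d) ℂ →ₗ[ℂ] Matrix (Fin d) (Fin d) ℂ)
    (hrange : ∀ X ∈ N, E X ∈ M)
    (hcontr : ∀ X ∈ N, ‖E X‖ ≤ ‖X‖)
    (hid : ∀ X ∈ M, E X = X)
    (hstate : ∀ X ∈ N, (σ * E X).trace = (σ * X).trace) :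
    ∀ X ∈ N, ∀ Y ∈ M, ∀ Z ∈ M, E (Y * X * Z) = Y * E X * Z := by
  have hleft : ∀ Y ∈ M, ∀ X ∈ N, E (Y * X) = Y * E X := by
    set SL : Submodule ℂ (Matrix (Fin d) (Fin d) ℂ) :=
      { carrier := {Y | ∀ X ∈ N, E (Y * X) = Y * E X}
        add_mem' := by
          intro a b ha hb X hX
          rw [add_mul, map_add, ha X hX, hb X hX, add_mul]
        zero_mem' := by intro X hX; simp
        smul_mem' := by
          intro c a ha X hX
          rw [smul_mul_assoc, LinearMap.map_smul, ha X hX, smul_mul_assoc] } with hSL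
    intro Y hY
    exact mem_of_proj_mem M SL
      (fun r hrM hr2 hrs X hX => proj_left_module M N hMN E hrange hcontr hid X hX r hrM hr2 hrs)
      Y hY
  have hright : ∀ Z ∈ M, ∀ X ∈ N, E (X * Z) = E X * Z := by
    set SR : Submodule ℂ (Matrix (Fin d) (Fin d) ℂ) :=
      { carrier := {Z | ∀ X ∈ N, E (X * Z) = E X * Z}
        add_mem' := by
          intro a b ha hb X hX
          rw [mul_add, map_add, ha X hX, hb X hX, mul_add]
        zero_mem' := by intro X hX; simp
        smul_mem' := by
          intro c a ha X hX
          rw [mul_smul_comm, LinearMap.map_smul, ha X hX, mul_smul_comm] } with hSR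
    intro Z hZ
    exact mem_of_proj_mem M SR
      (fun r hrM hr2 hrs X hX => proj_right_module M N hMN E hrange hcontr hid X hX r hrM hr2 hrs)
      Z hZ
  intro X hX Y hY Z hZ
  rw [mul_assoc, hleft Y hY (X * Z) (N.mul_mem hX (hMN hZ)), hright Z hZ X hX, mul_assoc]
end

section
/- Let E : N → M ⊆ N ⊆ B(H) be a conditional expectation (in the Heisenberg picture) that leaves invariant two full-rank density matrices ρ and σ, i.e. E_*(ρ) = ρ and E_*(σ) = σ where E_* is the Hilbert–Schmidt adjoint. Then Γ_ρ^{1/2} ∘ E ∘ Γ_ρ^{-1/2} = Γ_σ^{1/2} ∘ E ∘ Γ_σ^{-1/2}, where Γ_τ(X) := τ^{1/2} X τ^{1/2}. -/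
open Matrix ComplexOrder

noncomputable section

/-- Square root of a matrix via the functional calculus. -/
def matSqrt {d : ℕ} (A : Matrix (Fin d) (Fin d) ℂ) : Matrix (Fin d) (Fin d) ℂ :=
  cfc Real.sqrt A

/-- Inverse square root of a matrix via the functional calculus. -/
def matInvSqrt {d : ℕ} (A : Matrix (Fin d) (Fin d) ℂ) : Matrix (Fin d) (Fin d) ℂ :=
  cfc (fun x : ℝ => (Real.sqrt x)⁻¹) A

private lemma trace_ext' {d : ℕ} {A B : Matrix (Fin d) (Fin d) ℂ}
    (h : ∀ C, (A * C).trace = (B * C).trace) : A = B := by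
  ext i j
  have h' := h (single j i 1)
  simpa [Matrix.trace, Matrix.diag, Matrix.mul_apply, Matrix.single,
    Finset.sum_ite_eq, Finset.mul_sum, mul_ite, ite_and] using h'

private lemma diag_conj_transfer {n : ℕ}
    (F : Matrix (Fin n) (Fin n) ℂ →ₗ[ℂ] Matrix (Fin n) (Fin n) ℂ)
    (a b : Fin n → ℂ) (ha : ∀ i, a i ≠ 0) (hb : ∀ i, b i ≠ 0)
    (hcompat : ∀ i j k l, a i * a l = a j * a k → b i * b l = b j * b k)
    (H : ∀ Y, F (diagonal a * Y * diagonal (fun i => (a i)⁻¹))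
          = diagonal a * F Y * diagonal (fun i => (a i)⁻¹)) :
    ∀ Y, F (diagonal b * Y * diagonal (fun i => (b i)⁻¹))
          = diagonal b * F Y * diagonal (fun i => (b i)⁻¹) := by
  have key : ∀ (c : Fin n → ℂ) (i j : Fin n) (x : ℂ),
      diagonal c * single i j x * diagonal (fun i => (c i)⁻¹)
        = (c i * (c j)⁻¹) • single i j x := by
    intro c i j x
    ext k l
    by_cases hik : i = k <;> by_cases hjl : j = l <;>
      simp [Matrix.mul_diagonal, Matrix.diagonal_mul, Matrix.single, hik, hjl] <;>
      try ring
  have basis : ∀ (i j : Fin n) (x : ℂ),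
      F (diagonal b * single i j x * diagonal (fun i => (b i)⁻¹))
      = diagonal b * F (single i j x) * diagonal (fun i => (b i)⁻¹) := by
    intro i j x
    have hH := H (single i j x)
    rw [key a i j x, _root_.map_smul] at hH
    rw [key b i j x, _root_.map_smul]
    set Z := F (single i j x) with hZ
    ext k l
    have hkl : a i * (a j)⁻¹ * Z k l = a k * Z k l * (a l)⁻¹ := by
      have := congrFun (congrFun hH k) l
      simpa [Matrix.mul_diagonal, Matrix.diagonal_mul, Matrix.smul_apply] using this
    by_cases hz : Z k l = 0
    · simp [Matrix.mul_diagonal, Matrix.diagonal_mul, Matrix.smul_apply, hz]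
    · have hfrac : a i * (a j)⁻¹ = a k * (a l)⁻¹ := by
        have h2 : (a i * (a j)⁻¹) * Z k l = (a k * (a l)⁻¹) * Z k l := by
          rw [hkl]; ring
        exact mul_right_cancel₀ hz h2
      have haeq : a i * a l = a j * a k := by
        have hj := ha j; have hl := ha l
        field_simp at hfrac
        linear_combination hfrac
      have hbeq : b i * b l = b j * b k := hcompat i j k l haeq
      have hbfrac : b i * (b j)⁻¹ = b k * (b l)⁻¹ := by
        have hj := hb j; have hl := hb l
        field_simp
        linear_combination hbeq
      simp only [Matrix.mul_diagonal, Matrix.diagonal_mul, Matrix.smul_apply, smul_eq_mul]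
      calc b i * (b j)⁻¹ * Z k l = b k * (b l)⁻¹ * Z k l := by rw [hbfrac]
        _ = b k * Z k l * (b l)⁻¹ := by ring
  intro Y
  have hY := matrix_eq_sum_single Y
  calc F (diagonal b * Y * diagonal (fun i => (b i)⁻¹))
      = ∑ i, ∑ j, F (diagonal b * single i j (Y i j) * diagonal (fun i => (b i)⁻¹)) := by
        conv_lhs => rw [hY]
        rw [Finset.mul_sum, Finset.sum_mul, map_sum]
        simp [Finset.mul_sum, Finset.sum_mul, map_sum]
    _ = ∑ i, ∑ j, diagonal b * F (single i j (Y i j)) * diagonal (fun i => (b i)⁻¹) := by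
        refine Finset.sum_congr rfl fun i _ => Finset.sum_congr rfl fun j _ => basis i j (Y i j)
    _ = diagonal b * F Y * diagonal (fun i => (b i)⁻¹) := by
        conv_rhs => rw [hY]
        rw [map_sum, Finset.mul_sum, Finset.sum_mul]
        simp [Finset.mul_sum, Finset.sum_mul, map_sum]

private lemma half_trace {d : ℕ} (M : StarSubalgebra ℂ (Matrix (Fin d) (Fin d) ℂ))
    (E : Matrix (Fin d) (Fin d) ℂ →ₗ[ℂ] Matrix (Fin d) (Fin d) ℂ)
    (hrange : ∀ X, E X ∈ M)
    (hbimod : ∀ X : Matrix (Fin d) (Fin d) ℂ, ∀ Y ∈ M, ∀ Z ∈ M, E (Y * X * Z) = Y * E X * Z)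
    (ρ : Matrix (Fin d) (Fin d) ℂ) (hρ : ρ.PosDef)
    (hρinv : ∀ X, (ρ * E X).trace = (ρ * X).trace) :
    ∀ X B, ((matSqrt ρ * E (matInvSqrt ρ * X * matInvSqrt ρ) * matSqrt ρ) * B).trace
      = (X * E B).trace := by
  have hH : ρ.IsHermitian := hρ.1
  have hpos : ∀ i, 0 < hH.eigenvalues i := fun i => hρ.eigenvalues_pos i
  set U : Matrix (Fin d) (Fin d) ℂ := (hH.eigenvectorUnitary : Matrix (Fin d) (Fin d) ℂ)
    with hUdef
  set a : Fin d → ℂ := RCLike.ofReal ∘ hH.eigenvalues with hadef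
  set b : Fin d → ℂ := RCLike.ofReal ∘ Real.sqrt ∘ hH.eigenvalues with hbdef
  have ha : ∀ i, a i ≠ 0 := fun i => by
    simp only [hadef, Function.comp_apply, ne_eq, RCLike.ofReal_eq_zero]
    exact (hpos i).ne'
  have hb : ∀ i, b i ≠ 0 := fun i => by
    simp only [hbdef, Function.comp_apply, ne_eq, RCLike.ofReal_eq_zero]
    exact (Real.sqrt_pos.mpr (hpos i)).ne'
  have hU1 : U * star U = 1 := mem_unitaryGroup_iff.mp (hH.eigenvectorUnitary).2
  have hU2 : star U * U = 1 := mem_unitaryGroup_iff'.mp (hH.eigenvectorUnitary).2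
  have hcancel1 : ∀ X : Matrix (Fin d) (Fin d) ℂ, U * (star U * X) = X := fun X => by
    rw [← mul_assoc, hU1, one_mul]
  have hcancel2 : ∀ X : Matrix (Fin d) (Fin d) ℂ, star U * (U * X) = X := fun X => by
    rw [← mul_assoc, hU2, one_mul]
  have hρdiag : ρ = U * diagonal a * star U := hH.spectral_theorem
  have hSdiag : matSqrt ρ = U * diagonal b * star U := by
    rw [matSqrt, hH.cfc_eq]
    rfl
  have hTdiag : matInvSqrt ρ = U * diagonal (fun i => (b i)⁻¹) * star U := by
    rw [matInvSqrt, hH.cfc_eq]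
    show U * diagonal (RCLike.ofReal ∘ (fun x : ℝ => (Real.sqrt x)⁻¹) ∘ hH.eigenvalues) * star U
        = _
    have : (RCLike.ofReal ∘ (fun x : ℝ => (Real.sqrt x)⁻¹) ∘ hH.eigenvalues : Fin d → ℂ)
        = fun i => (b i)⁻¹ := by
      funext i
      simp [hbdef, RCLike.ofReal_inv]
    rw [this]
  set S : Matrix (Fin d) (Fin d) ℂ := matSqrt ρ with hSdef
  set T : Matrix (Fin d) (Fin d) ℂ := matInvSqrt ρ with hTdef
  -- basic products
  have hdiagb : diagonal b * diagonal (fun i => (b i)⁻¹) = 1 := by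
    have : (fun i => b i * (b i)⁻¹) = fun _ => (1 : ℂ) :=
      funext fun i => mul_inv_cancel₀ (hb i)
    rw [diagonal_mul_diagonal, this, diagonal_one]
  have hdiagb' : diagonal (fun i => (b i)⁻¹) * diagonal b = 1 := by
    have : (fun i => (b i)⁻¹ * b i) = fun _ => (1 : ℂ) :=
      funext fun i => inv_mul_cancel₀ (hb i)
    rw [diagonal_mul_diagonal, this, diagonal_one]
  have hdiaga : diagonal a * diagonal (fun i => (a i)⁻¹) = 1 := by
    have : (fun i => a i * (a i)⁻¹) = fun _ => (1 : ℂ) :=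
      funext fun i => mul_inv_cancel₀ (ha i)
    rw [diagonal_mul_diagonal, this, diagonal_one]
  have hdiaga' : diagonal (fun i => (a i)⁻¹) * diagonal a = 1 := by
    have : (fun i => (a i)⁻¹ * a i) = fun _ => (1 : ℂ) :=
      funext fun i => inv_mul_cancel₀ (ha i)
    rw [diagonal_mul_diagonal, this, diagonal_one]
  have hST : S * T = 1 := by
    rw [hSdiag, hTdiag]
    simp only [mul_assoc, hcancel2]
    rw [← mul_assoc (diagonal b), hdiagb, one_mul, hU1]
  have hTS : T * S = 1 := by
    rw [hSdiag, hTdiag]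
    simp only [mul_assoc, hcancel2]
    rw [← mul_assoc (diagonal (fun i => (b i)⁻¹)), hdiagb', one_mul, hU1]
  have hSS : S * S = ρ := by
    rw [hSdiag, hρdiag]
    simp only [mul_assoc, hcancel2]
    rw [← mul_assoc (diagonal b), diagonal_mul_diagonal]
    have : (fun i => b i * b i) = a := by
      funext i
      simp only [hbdef, hadef, Function.comp_apply, ← RCLike.ofReal_mul,
        Real.mul_self_sqrt (hpos i).le]
    rw [this]
  -- ρ-inverse
  set ρinv : Matrix (Fin d) (Fin d) ℂ := U * diagonal (fun i => (a i)⁻¹) * star U with hρinvdef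
  have hρρinv : ρ * ρinv = 1 := by
    rw [hρdiag, hρinvdef]
    simp only [mul_assoc, hcancel2]
    rw [← mul_assoc (diagonal a), hdiaga, one_mul, hU1]
  have hρinvρ : ρinv * ρ = 1 := by
    rw [hρdiag, hρinvdef]
    simp only [mul_assoc, hcancel2]
    rw [← mul_assoc (diagonal (fun i => (a i)⁻¹)), hdiaga', one_mul, hU1]
  -- GNS symmetry
  have one_mem_M : (1 : Matrix (Fin d) (Fin d) ℂ) ∈ M := one_mem M
  have lemma1 : ∀ C B, (ρ * (E C * B)).trace = (ρ * (C * E B)).trace := by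
    intro C B
    have e1 : E (E C * B) = E C * E B := by
      have := hbimod B (E C) (hrange C) 1 one_mem_M
      simpa using this
    have e2 : E (C * E B) = E C * E B := by
      have := hbimod C 1 one_mem_M (E B) (hrange B)
      simpa using this
    calc (ρ * (E C * B)).trace = (ρ * E (E C * B)).trace := (hρinv _).symm
      _ = (ρ * (E C * E B)).trace := by rw [e1]
      _ = (ρ * E (C * E B)).trace := by rw [e2]
      _ = (ρ * (C * E B)).trace := hρinv _
  -- commutation with the modular operator
  have lemma2 : ∀ Z, E (ρ * Z * ρinv) = ρ * E Z * ρinv := by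
    intro Z
    have main : E (ρ * Z * ρinv) * ρ = ρ * E Z := by
      apply trace_ext'
      intro C
      calc (E (ρ * Z * ρinv) * ρ * C).trace
          = (C * (E (ρ * Z * ρinv) * ρ)).trace := by rw [Matrix.trace_mul_comm]
        _ = (ρ * (C * E (ρ * Z * ρinv))).trace := by
            rw [← mul_assoc, Matrix.trace_mul_comm]
        _ = (ρ * (E C * (ρ * Z * ρinv))).trace := (lemma1 C (ρ * Z * ρinv)).symm
        _ = ((ρ * (E C * (ρ * Z))) * ρinv).trace := by simp only [mul_assoc]
        _ = (E C * (ρ * Z)).trace := by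
            rw [Matrix.trace_mul_comm, ← mul_assoc, hρinvρ, one_mul]
        _ = (ρ * (Z * E C)).trace := by
            rw [Matrix.trace_mul_comm]
            simp only [mul_assoc]
        _ = (ρ * (E Z * C)).trace := (lemma1 Z C).symm
        _ = (ρ * E Z * C).trace := by simp only [mul_assoc]
    calc E (ρ * Z * ρinv) = E (ρ * Z * ρinv) * (ρ * ρinv) := by rw [hρρinv, mul_one]
      _ = (E (ρ * Z * ρinv) * ρ) * ρinv := by simp only [mul_assoc]
      _ = ρ * E Z * ρinv := by rw [main]
  -- conjugated map
  let F : Matrix (Fin d) (Fin d) ℂ →ₗ[ℂ] Matrix (Fin d) (Fin d) ℂ :=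
    { toFun := fun Y => star U * E (U * Y * star U) * U
      map_add' := fun X Y => by
        simp [Matrix.mul_add, Matrix.add_mul]
      map_smul' := fun c X => by
        simp [mul_smul_comm, smul_mul_assoc] }
  have Fdef : ∀ Y, F Y = star U * E (U * Y * star U) * U := fun _ => rfl
  have HF : ∀ Y, F (diagonal a * Y * diagonal (fun i => (a i)⁻¹))
      = diagonal a * F Y * diagonal (fun i => (a i)⁻¹) := by
    intro Y
    have harg : U * (diagonal a * Y * diagonal (fun i => (a i)⁻¹)) * star U
        = ρ * (U * Y * star U) * ρinv := by
      rw [hρdiag, hρinvdef]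
      simp only [mul_assoc, hcancel2]
    rw [Fdef, harg, lemma2 (U * Y * star U), Fdef]
    rw [hρdiag, hρinvdef]
    simp only [mul_assoc, hcancel2, hcancel1, hU1, hU2, mul_one, one_mul]
  have HG := diag_conj_transfer F a b ha hb
    (by
      intro i j k l h
      have h' : hH.eigenvalues i * hH.eigenvalues l = hH.eigenvalues j * hH.eigenvalues k := by
        simp only [hadef, Function.comp_apply, ← RCLike.ofReal_mul] at h
        exact_mod_cast h
      have hr : Real.sqrt (hH.eigenvalues i) * Real.sqrt (hH.eigenvalues l)
          = Real.sqrt (hH.eigenvalues j) * Real.sqrt (hH.eigenvalues k) := by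
        rw [← Real.sqrt_mul (hpos i).le, ← Real.sqrt_mul (hpos j).le, h']
      simp only [hbdef, Function.comp_apply, ← RCLike.ofReal_mul, hr]) HF
  -- half-step commutation with the square root
  have halfcomm : ∀ Z, E (S * Z * T) = S * E Z * T := by
    intro Z
    have harg : S * Z * T
        = U * (diagonal b * (star U * Z * U) * diagonal (fun i => (b i)⁻¹)) * star U := by
      rw [hSdiag, hTdiag]
      simp only [mul_assoc, hcancel2, hcancel1]
    have hFW : F (star U * Z * U) = star U * E Z * U := by
      have harg2 : U * (star U * Z * U) * star U = Z := by
        simp only [mul_assoc, hcancel1, hU1, mul_one]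
      rw [Fdef, harg2]
    calc E (S * Z * T)
        = E (U * (diagonal b * (star U * Z * U) * diagonal (fun i => (b i)⁻¹)) * star U) := by
          rw [harg]
      _ = U * F (diagonal b * (star U * Z * U) * diagonal (fun i => (b i)⁻¹)) * star U := by
          rw [Fdef]
          simp only [mul_assoc, hcancel1, hcancel2, hU1, mul_one]
      _ = U * (diagonal b * F (star U * Z * U) * diagonal (fun i => (b i)⁻¹)) * star U := by
          rw [HG]
      _ = U * (diagonal b * (star U * E Z * U) * diagonal (fun i => (b i)⁻¹)) * star U := by
          rw [hFW]
      _ = S * E Z * T := by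
          rw [hSdiag, hTdiag]
          simp only [mul_assoc, hcancel2, hcancel1]
  -- final computation
  intro X B
  have hTSS : T * (S * S) = S := by rw [← mul_assoc, hTS, one_mul]
  have hTTρ : (T * T) * ρ = 1 := by
    rw [← hSS]
    simp only [mul_assoc, hTSS]
    exact hTS
  have step1 : S * E (T * X * T) * S = E (X * (T * T)) * (S * S) := by
    have h := halfcomm (T * X * T)
    have harg : S * (T * X * T) * T = X * (T * T) := by
      calc S * (T * X * T) * T = S * T * (X * (T * T)) := by simp only [mul_assoc]
        _ = X * (T * T) := by rw [hST, one_mul]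
    rw [harg] at h
    calc S * E (T * X * T) * S
        = S * E (T * X * T) * T * (S * S) := by
          simp only [mul_assoc, hTSS]
      _ = E (X * (T * T)) * (S * S) := by rw [← h]
  calc (S * E (T * X * T) * S * B).trace
      = (E (X * (T * T)) * (S * S) * B).trace := by rw [step1]
    _ = ((S * S) * (B * E (X * (T * T)))).trace := by
        rw [Matrix.trace_mul_comm, ← mul_assoc, Matrix.trace_mul_comm]
    _ = (ρ * (B * E (X * (T * T)))).trace := by rw [hSS]
    _ = (ρ * (E B * (X * (T * T)))).trace := (lemma1 B (X * (T * T))).symm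
    _ = ((ρ * (E B * X)) * (T * T)).trace := by simp only [mul_assoc]
    _ = (((T * T) * ρ) * (E B * X)).trace := by
        rw [Matrix.trace_mul_comm, ← mul_assoc]
    _ = (E B * X).trace := by rw [hTTρ, one_mul]
    _ = (X * E B).trace := Matrix.trace_mul_comm _ _

/-- If a conditional expectation `E : N → M` leaves invariant two full-rank
density matrices `ρ` and `σ` (i.e. `E_*(ρ) = ρ` and `E_*(σ) = σ`, expressed by the invariance
of the corresponding expectation functionals), then
`Γ_ρ^{1/2} ∘ E ∘ Γ_ρ^{-1/2} = Γ_σ^{1/2} ∘ E ∘ Γ_σ^{-1/2}`,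
where `Γ_τ(X) = τ^{1/2} X τ^{1/2}`. -/
theorem conditional_expectation_modular_independence
    {d : ℕ} (M N : StarSubalgebra ℂ (Matrix (Fin d) (Fin d) ℂ)) (hMN : M ≤ N)
    (E : Matrix (Fin d) (Fin d) ℂ →ₗ[ℂ] Matrix (Fin d) (Fin d) ℂ)
    (hrange : ∀ X, E X ∈ M)
    (hid : ∀ X ∈ M, E X = X)
    (hunital : E 1 = 1)
    (hpos : ∀ X : Matrix (Fin d) (Fin d) ℂ, X.PosSemidef → (E X).PosSemidef)
    (hbimod : ∀ X : Matrix (Fin d) (Fin d) ℂ, ∀ Y ∈ M, ∀ Z ∈ M, E (Y * X * Z) = Y * E X * Z)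
    (ρ σ : Matrix (Fin d) (Fin d) ℂ)
    (hρ : ρ.PosDef) (hρtr : ρ.trace = 1)
    (hσ : σ.PosDef) (hσtr : σ.trace = 1)
    (hρinv : ∀ X, (ρ * E X).trace = (ρ * X).trace)
    (hσinv : ∀ X, (σ * E X).trace = (σ * X).trace) :
    ∀ X : Matrix (Fin d) (Fin d) ℂ,
      matSqrt ρ * E (matInvSqrt ρ * X * matInvSqrt ρ) * matSqrt ρ
        = matSqrt σ * E (matInvSqrt σ * X * matInvSqrt σ) * matSqrt σ := by
  intro X
  apply trace_ext'
  intro C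
  rw [half_trace M E hrange hbimod ρ hρ hρinv X C,
    ← half_trace M E hrange hbimod σ hσ hσinv X C]

end
end

section
/- Let H = ℂ^ℓ, let E₁ and E₂ be the pinching maps (dephasing channels) onto two orthonormal bases {e¹_k} and {e²_k} of ℂ^ℓ, and let E^M := (1/ℓ) Tr[·] 1 be the conditional expectation onto the trivial algebra. Set ε := ℓ · max_{k,k'} | |⟨e¹_k, e²_{k'}⟩|² − 1/ℓ |. Then for every positive semidefinite X, ‖(E₁ ∘ E₂ − E^M)(X)‖_∞ ≤ (ε/ℓ) Tr[X]. -/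
open Matrix ComplexOrder
open scoped Matrix.Norms.L2Operator

noncomputable section

/-- Pinching (dephasing) map onto the orthonormal basis `e`:
`X ↦ Σ_k ⟨e_k, X e_k⟩ |e_k⟩⟨e_k|`. -/
def pinch {l : ℕ} (e : Fin l → Fin l → ℂ) (X : Matrix (Fin l) (Fin l) ℂ) :
    Matrix (Fin l) (Fin l) ℂ :=
  ∑ k, (star (e k) ⬝ᵥ X *ᵥ e k) • vecMulVec (e k) (star (e k))

namespace PinchAux

variable {l : ℕ}

/-- Matrix whose rows are the conjugates of the basis vectors. -/
def U (e : Fin l → Fin l → ℂ) : Matrix (Fin l) (Fin l) ℂ :=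
  Matrix.of fun k i => (starRingEnd ℂ) (e k i)

lemma diag_norm_le (g : Fin l → ℂ) {M : ℝ} (hM : 0 ≤ M) (hg : ∀ k, ‖g k‖ ≤ M) :
    ‖Matrix.diagonal g‖ ≤ M := by
  rw [Matrix.l2_opNorm_def]
  refine ContinuousLinearMap.opNorm_le_bound _ hM fun x => ?_
  have hval : ((Matrix.toEuclideanLin.trans LinearMap.toContinuousLinearMap)
      (Matrix.diagonal g)) x = (WithLp.equiv 2 (Fin l → ℂ)).symm
      (Matrix.diagonal g *ᵥ (WithLp.equiv 2 (Fin l → ℂ)) x) := rfl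
  rw [hval, EuclideanSpace.norm_eq, EuclideanSpace.norm_eq]
  have hmv : ∀ i, (Matrix.diagonal g *ᵥ (WithLp.equiv 2 (Fin l → ℂ)) x) i
      = g i * (WithLp.equiv 2 (Fin l → ℂ)) x i := by
    intro i
    simp [Matrix.mulVec, dotProduct, Matrix.diagonal, ite_mul]
  have h1 : ∑ i, ‖((WithLp.equiv 2 (Fin l → ℂ)).symm
      (Matrix.diagonal g *ᵥ (WithLp.equiv 2 (Fin l → ℂ)) x)) i‖ ^ 2
      ≤ M ^ 2 * ∑ i, ‖x i‖ ^ 2 := by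
    rw [Finset.mul_sum]
    refine Finset.sum_le_sum fun i _ => ?_
    have : ((WithLp.equiv 2 (Fin l → ℂ)).symm
        (Matrix.diagonal g *ᵥ (WithLp.equiv 2 (Fin l → ℂ)) x)) i
        = g i * x i := by rw [WithLp.equiv_symm_apply, PiLp.toLp_apply, hmv]; rfl
    rw [this, norm_mul, mul_pow]
    have hgi : ‖g i‖ ^ 2 ≤ M ^ 2 := pow_le_pow_left₀ (norm_nonneg _) (hg i) 2
    exact mul_le_mul_of_nonneg_right hgi (sq_nonneg _)
  calc Real.sqrt (∑ i, ‖((WithLp.equiv 2 (Fin l → ℂ)).symm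
      (Matrix.diagonal g *ᵥ (WithLp.equiv 2 (Fin l → ℂ)) x)) i‖ ^ 2)
      ≤ Real.sqrt (M ^ 2 * ∑ i, ‖x i‖ ^ 2) := Real.sqrt_le_sqrt h1
    _ = M * Real.sqrt (∑ i, ‖x i‖ ^ 2) := by
        rw [Real.sqrt_mul (sq_nonneg M), Real.sqrt_sq hM]

lemma sum_smul_vecMulVec (e : Fin l → Fin l → ℂ) (g : Fin l → ℂ) :
    ∑ k, g k • vecMulVec (e k) (star (e k)) = (U e)ᴴ * Matrix.diagonal g * U e := by
  ext i j
  simp only [Matrix.sum_apply, Matrix.smul_apply, vecMulVec_apply, smul_eq_mul,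
    Matrix.mul_apply, Matrix.conjTranspose_apply, Matrix.diagonal_apply, U, Matrix.of_apply,
    Finset.sum_mul, mul_ite, ite_mul, zero_mul, mul_zero, Finset.sum_ite_eq,
    Finset.mem_univ, if_true]
  refine Finset.sum_congr rfl fun k _ => ?_
  simp [Pi.star_apply, RCLike.star_def]
  ring

lemma U_mul_conjTranspose (e : Fin l → Fin l → ℂ)
    (he : ∀ k k', star (e k) ⬝ᵥ e k' = if k = k' then 1 else 0) :
    U e * (U e)ᴴ = 1 := by
  ext k k'
  have := he k k'
  simp only [Matrix.mul_apply, U, Matrix.conjTranspose_apply, Matrix.of_apply,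
    Matrix.one_apply]
  rw [← this]
  simp [dotProduct, Pi.star_apply, RCLike.star_def, mul_comm]

lemma conjTranspose_mul_U (e : Fin l → Fin l → ℂ)
    (he : ∀ k k', star (e k) ⬝ᵥ e k' = if k = k' then 1 else 0) :
    (U e)ᴴ * U e = 1 :=
  mul_eq_one_comm.mp (U_mul_conjTranspose e he)

lemma norm_U_le (e : Fin l → Fin l → ℂ)
    (he : ∀ k k', star (e k) ⬝ᵥ e k' = if k = k' then 1 else 0) :
    ‖U e‖ ≤ 1 := by
  have h2 := Matrix.l2_opNorm_conjTranspose_mul_self (U e)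
  rw [conjTranspose_mul_U e he] at h2
  have hone : ‖(1 : Matrix (Fin l) (Fin l) ℂ)‖ ≤ 1 := by
    rw [← Matrix.diagonal_one]
    exact diag_norm_le _ zero_le_one fun k => by simp
  nlinarith [norm_nonneg (U e)]

lemma conj_diag_norm_le (e : Fin l → Fin l → ℂ)
    (he : ∀ k k', star (e k) ⬝ᵥ e k' = if k = k' then 1 else 0)
    (g : Fin l → ℂ) {M : ℝ} (hM : 0 ≤ M) (hg : ∀ k, ‖g k‖ ≤ M) :
    ‖(U e)ᴴ * Matrix.diagonal g * U e‖ ≤ M := by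
  have hU := norm_U_le e he
  have hUH : ‖(U e)ᴴ‖ ≤ 1 := by rw [Matrix.l2_opNorm_conjTranspose]; exact hU
  have hD := diag_norm_le g hM hg
  have h1 := Matrix.l2_opNorm_mul ((U e)ᴴ * Matrix.diagonal g) (U e)
  have h2 := Matrix.l2_opNorm_mul (U e)ᴴ (Matrix.diagonal g)
  have n1 := norm_nonneg ((U e)ᴴ * Matrix.diagonal g)
  have n2 := norm_nonneg (U e)
  have n3 := norm_nonneg (U e)ᴴ
  have n4 := norm_nonneg (Matrix.diagonal g)
  nlinarith


lemma pinch_eq (e : Fin l → Fin l → ℂ) (X : Matrix (Fin l) (Fin l) ℂ) :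
    pinch e X = (U e)ᴴ * Matrix.diagonal (fun k => star (e k) ⬝ᵥ X *ᵥ e k) * U e :=
  sum_smul_vecMulVec e _

/-- `⟨e1 k, (pinch e2 X) e1 k⟩ = ∑ k', c k' * w k k'`. -/
lemma pinch_inner (e1 e2 : Fin l → Fin l → ℂ) (X : Matrix (Fin l) (Fin l) ℂ) (k : Fin l) :
    star (e1 k) ⬝ᵥ (pinch e2 X) *ᵥ e1 k
      = ∑ k', (star (e2 k') ⬝ᵥ X *ᵥ e2 k') *
          ((star (e1 k) ⬝ᵥ e2 k') * (star (e2 k') ⬝ᵥ e1 k)) := by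
  unfold pinch
  have hsum : (∑ k' : Fin l, (star (e2 k') ⬝ᵥ X *ᵥ e2 k') • vecMulVec (e2 k') (star (e2 k'))) *ᵥ e1 k
      = ∑ k', ((star (e2 k') ⬝ᵥ X *ᵥ e2 k') • vecMulVec (e2 k') (star (e2 k'))) *ᵥ e1 k := by
    funext i
    simp [Matrix.mulVec, dotProduct, Matrix.sum_apply, Finset.sum_mul, Finset.sum_apply]
    rw [Finset.sum_comm]
  rw [hsum]
  have hdot : star (e1 k) ⬝ᵥ (∑ k', ((star (e2 k') ⬝ᵥ X *ᵥ e2 k') • vecMulVec (e2 k') (star (e2 k'))) *ᵥ e1 k)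
      = ∑ k', star (e1 k) ⬝ᵥ (((star (e2 k') ⬝ᵥ X *ᵥ e2 k') • vecMulVec (e2 k') (star (e2 k'))) *ᵥ e1 k) := by
    simp [dotProduct, Finset.mul_sum, Finset.sum_apply]
    rw [Finset.sum_comm]
  rw [hdot]
  refine Finset.sum_congr rfl fun k' _ => ?_
  rw [Matrix.smul_mulVec, dotProduct_smul]
  have : vecMulVec (e2 k') (star (e2 k')) *ᵥ e1 k
      = (star (e2 k') ⬝ᵥ e1 k) • (e2 k') := by
    funext i
    simp [Matrix.mulVec, dotProduct, vecMulVec_apply, Finset.mul_sum, mul_comm,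
      mul_left_comm]
  rw [this, dotProduct_smul]
  simp only [smul_eq_mul]
  ring

/-- The trace is the sum of diagonal coefficients in any orthonormal basis. -/
lemma trace_eq_sum (e : Fin l → Fin l → ℂ)
    (he : ∀ k k', star (e k) ⬝ᵥ e k' = if k = k' then 1 else 0)
    (X : Matrix (Fin l) (Fin l) ℂ) :
    X.trace = ∑ k, star (e k) ⬝ᵥ X *ᵥ e k := by
  have h1 : (U e * X * (U e)ᴴ).trace = X.trace := by
    rw [Matrix.trace_mul_cycle, conjTranspose_mul_U e he, one_mul]
  rw [← h1, Matrix.trace]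
  refine Finset.sum_congr rfl fun k _ => ?_
  simp only [Matrix.diag_apply, Matrix.mul_apply, Matrix.conjTranspose_apply, U,
    Matrix.of_apply, dotProduct, Matrix.mulVec, Pi.star_apply, RCLike.star_def,
    Finset.sum_mul, Finset.mul_sum, RingHom.id_apply, starRingEnd_self_apply]
  rw [Finset.sum_comm]
  refine Finset.sum_congr rfl fun i _ => Finset.sum_congr rfl fun j _ => by ring

end PinchAux

/-- For pinchings `E₁, E₂` onto orthonormal bases `e¹, e²` of `ℂ^ℓ`,
and `E^M = (1/ℓ)Tr[·]𝟙` the conditional expectation onto the trivial algebra, setting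
`ε := ℓ · max_{k,k'} | |⟨e¹_k, e²_{k'}⟩|² − 1/ℓ |`, for every positive semidefinite `X`:
`‖(E₁∘E₂ − E^M)(X)‖_∞ ≤ (ε/ℓ) Tr[X]`. -/
theorem pinching_product_minus_trivial_bound
    {l : ℕ} (hl : 0 < l) (e1 e2 : Fin l → Fin l → ℂ)
    (he1 : ∀ k k', star (e1 k) ⬝ᵥ e1 k' = if k = k' then 1 else 0)
    (he2 : ∀ k k', star (e2 k) ⬝ᵥ e2 k' = if k = k' then 1 else 0)
    (ε : ℝ)
    (hε : ε = l * ⨆ k : Fin l, ⨆ k' : Fin l,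
      |‖star (e1 k) ⬝ᵥ e2 k'‖ ^ 2 - 1 / l|) :
    ∀ X : Matrix (Fin l) (Fin l) ℂ, X.PosSemidef →
      ‖pinch e1 (pinch e2 X) - (X.trace / l) • (1 : Matrix (Fin l) (Fin l) ℂ)‖
        ≤ ε / l * (X.trace).re := by
  intro X hX
  classical
  open PinchAux in
  have hl' : (l : ℝ) ≠ 0 := Nat.cast_ne_zero.mpr hl.ne'
  set c : Fin l → ℂ := fun k' => star (e2 k') ⬝ᵥ X *ᵥ e2 k' with hc
  set S : ℝ := ⨆ k : Fin l, ⨆ k' : Fin l,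
      |‖star (e1 k) ⬝ᵥ e2 k'‖ ^ 2 - 1 / l| with hSdef
  have hcpos : ∀ k', 0 ≤ c k' := fun k' => hX.dotProduct_mulVec_nonneg (e2 k')
  have hcre0 : ∀ k', 0 ≤ (c k').re := fun k' => by
    have := (Complex.le_def.mp (hcpos k')).1; simpa using this
  have hcim : ∀ k', (c k').im = 0 := fun k' => by
    have := (Complex.le_def.mp (hcpos k')).2; simpa using this.symm
  have hcre : ∀ k', c k' = ((c k').re : ℂ) := fun k' =>
    Complex.ext_iff.mpr ⟨by simp, by simp [hcim k']⟩
  have htr : X.trace = ∑ k', c k' := PinchAux.trace_eq_sum e2 he2 X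
  have htre : (X.trace).re = ∑ k', (c k').re := by
    rw [htr]; exact Complex.re_sum _ _
  have htre0 : 0 ≤ (X.trace).re := htre ▸ Finset.sum_nonneg fun k' _ => hcre0 k'
  have hSb : ∀ k k', |‖star (e1 k) ⬝ᵥ e2 k'‖ ^ 2 - 1 / l| ≤ S := by
    intro k k'
    refine le_trans (le_ciSup (f := fun k'' : Fin l =>
        |‖star (e1 k) ⬝ᵥ e2 k''‖ ^ 2 - 1 / (l : ℝ)|)
      (Set.Finite.bddAbove (Set.finite_range _)) k') ?_
    exact le_ciSup (f := fun k : Fin l => ⨆ k' : Fin l,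
        |‖star (e1 k) ⬝ᵥ e2 k'‖ ^ 2 - 1 / (l : ℝ)|)
      (Set.Finite.bddAbove (Set.finite_range _)) k
  have hS0 : 0 ≤ S := le_trans (abs_nonneg _) (hSb ⟨0, hl⟩ ⟨0, hl⟩)
  have hεS : ε / l = S := by rw [hε]; field_simp
  set d : Fin l → ℂ := fun k => (star (e1 k) ⬝ᵥ (pinch e2 X) *ᵥ e1 k) - X.trace / l with hd
  have hmat : pinch e1 (pinch e2 X) - (X.trace / l) • (1 : Matrix (Fin l) (Fin l) ℂ)
      = (PinchAux.U e1)ᴴ * Matrix.diagonal d * PinchAux.U e1 := by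
    have hone : (X.trace / l) • (1 : Matrix (Fin l) (Fin l) ℂ)
        = (PinchAux.U e1)ᴴ * Matrix.diagonal (fun _ : Fin l => X.trace / l) * PinchAux.U e1 := by
      have h1 : Matrix.diagonal (fun _ : Fin l => X.trace / l)
          = (X.trace / l) • (1 : Matrix (Fin l) (Fin l) ℂ) := by
        ext i j; by_cases h : i = j <;> simp [Matrix.diagonal_apply, Matrix.one_apply, h]
      rw [h1, Matrix.mul_smul, Matrix.mul_one, Matrix.smul_mul,
        PinchAux.conjTranspose_mul_U e1 he1]
    rw [PinchAux.pinch_eq e1 (pinch e2 X), hone, ← Matrix.sub_mul, ← Matrix.mul_sub,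
      Matrix.diagonal_sub]
  have hdb : ∀ k, ‖d k‖ ≤ S * (X.trace).re := by
    intro k
    have hform : d k = ∑ k', c k' *
        (((star (e1 k) ⬝ᵥ e2 k') * (star (e2 k') ⬝ᵥ e1 k)) - 1 / l) := by
      simp only [hd]
      rw [PinchAux.pinch_inner e1 e2 X k, htr, Finset.sum_div, ← Finset.sum_sub_distrib]
      exact Finset.sum_congr rfl fun k' _ => by ring
    rw [hform]
    refine (norm_sum_le _ _).trans ?_
    have hterm : ∀ k', ‖c k' * (((star (e1 k) ⬝ᵥ e2 k') * (star (e2 k') ⬝ᵥ e1 k)) - 1 / l)‖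
        ≤ (c k').re * S := by
      intro k'
      rw [norm_mul]
      have h5 : star (e2 k') ⬝ᵥ e1 k = (starRingEnd ℂ) (star (e1 k) ⬝ᵥ e2 k') := by
        simp only [dotProduct, map_sum]
        exact Finset.sum_congr rfl fun i _ => by simp [mul_comm]
      have hzw : (star (e1 k) ⬝ᵥ e2 k') * (star (e2 k') ⬝ᵥ e1 k)
          = ((‖star (e1 k) ⬝ᵥ e2 k'‖ ^ 2 : ℝ) : ℂ) := by
        rw [h5, Complex.mul_conj, Complex.sq_norm]
      have hcast : ((‖star (e1 k) ⬝ᵥ e2 k'‖ ^ 2 : ℝ) : ℂ) - 1 / l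
          = (((‖star (e1 k) ⬝ᵥ e2 k'‖ ^ 2 - 1 / l : ℝ)) : ℂ) := by
        push_cast; ring
      rw [hzw, hcast]
      have hnc : ‖c k'‖ = (c k').re := by
        conv_lhs => rw [hcre k']
        rw [Complex.norm_real, Real.norm_eq_abs, abs_of_nonneg (hcre0 k')]
      have hnt : ‖(((‖star (e1 k) ⬝ᵥ e2 k'‖ ^ 2 - 1 / l : ℝ)) : ℂ)‖ ≤ S := by
        rw [Complex.norm_real, Real.norm_eq_abs]; exact hSb k k'
      rw [hnc]
      exact mul_le_mul_of_nonneg_left hnt (hcre0 k')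
    calc ∑ k', ‖c k' * (((star (e1 k) ⬝ᵥ e2 k') * (star (e2 k') ⬝ᵥ e1 k)) - 1 / l)‖
        ≤ ∑ k', (c k').re * S := Finset.sum_le_sum fun k' _ => hterm k'
      _ = (X.trace).re * S := by rw [← Finset.sum_mul, ← htre]
      _ = S * (X.trace).re := mul_comm _ _
  rw [hmat, hεS]
  exact PinchAux.conj_diag_norm_le e1 he1 d (mul_nonneg hS0 htre0) hdb

end
end

section
/- Let σ be a full-rank density matrix on a finite-dimensional Hilbert space, M ⊆ N subalgebras, E_τ the trace-preserving (Hilbert–Schmidt self-adjoint) conditional expectation onto M, σ_M := E_τ(σ), A_σ(X) := σ_M^{−1/2} E_τ[σ^{1/2} X σ^{1/2}] σ_M^{−1/2}, R_σ its adjoint (Petz recovery map of the partial expectation), and E_σ := lim_{n→∞} A_σ^n the conditional expectation onto the fixed-point algebra of A_σ. Then for any density matrix ρ on N: ρ = R_σ(E_τ(ρ)) if and only if ρ = E_{σ*}(ρ). -/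
open Matrix ComplexOrder

noncomputable section

/-- The map `A_σ(X) := σ_M^{-1/2} E_τ[σ^{1/2} X σ^{1/2}] σ_M^{-1/2}` (with `σ_M = E_τ(σ)`). -/
def Asig {d : ℕ} (Eτ : Matrix (Fin d) (Fin d) ℂ →ₗ[ℂ] Matrix (Fin d) (Fin d) ℂ)
    (σ X : Matrix (Fin d) (Fin d) ℂ) : Matrix (Fin d) (Fin d) ℂ :=
  matInvSqrt (Eτ σ) * Eτ (matSqrt σ * X * matSqrt σ) * matInvSqrt (Eτ σ)

/-- The Petz recovery map `R_σ(Y) := σ^{1/2} σ_M^{-1/2} Y σ_M^{-1/2} σ^{1/2}`. -/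
def Rsig {d : ℕ} (Eτ : Matrix (Fin d) (Fin d) ℂ →ₗ[ℂ] Matrix (Fin d) (Fin d) ℂ)
    (σ Y : Matrix (Fin d) (Fin d) ℂ) : Matrix (Fin d) (Fin d) ℂ :=
  matSqrt σ * (matInvSqrt (Eτ σ) * Y * matInvSqrt (Eτ σ)) * matSqrt σ

/-- For a positive definite matrix, the spectrum is positive. -/
lemma posDef_spectrum_pos {d : ℕ} {σ : Matrix (Fin d) (Fin d) ℂ} (hσ : σ.PosDef) :
    ∀ x ∈ spectrum ℝ σ, 0 < x := by
  intro x hx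
  rw [hσ.isHermitian.spectrum_real_eq_range_eigenvalues] at hx
  obtain ⟨i, rfl⟩ := hx
  exact hσ.eigenvalues_pos i

lemma sqrt_mul_invSqrt {d : ℕ} {σ : Matrix (Fin d) (Fin d) ℂ} (hσ : σ.PosDef) :
    matSqrt σ * matInvSqrt σ = 1 := by
  have hsa : IsSelfAdjoint σ := hσ.1
  have hcont : ContinuousOn (fun x : ℝ => (Real.sqrt x)⁻¹) (spectrum ℝ σ) :=
    (Real.continuous_sqrt.continuousOn).inv₀ fun x hx =>
      (Real.sqrt_pos.mpr (posDef_spectrum_pos hσ x hx)).ne'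
  rw [matSqrt, matInvSqrt, ← cfc_mul _ _ σ Real.continuous_sqrt.continuousOn hcont]
  calc cfc (fun x : ℝ => Real.sqrt x * (Real.sqrt x)⁻¹) σ
      = cfc (fun _ : ℝ => (1 : ℝ)) σ := by
        apply cfc_congr
        intro x hx
        exact mul_inv_cancel₀ (Real.sqrt_pos.mpr (posDef_spectrum_pos hσ x hx)).ne'
    _ = 1 := cfc_const_one ℝ σ

lemma invSqrt_mul_sqrt {d : ℕ} {σ : Matrix (Fin d) (Fin d) ℂ} (hσ : σ.PosDef) :
    matInvSqrt σ * matSqrt σ = 1 := by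
  have hsa : IsSelfAdjoint σ := hσ.1
  have hcont : ContinuousOn (fun x : ℝ => (Real.sqrt x)⁻¹) (spectrum ℝ σ) :=
    (Real.continuous_sqrt.continuousOn).inv₀ fun x hx =>
      (Real.sqrt_pos.mpr (posDef_spectrum_pos hσ x hx)).ne'
  rw [matSqrt, matInvSqrt, ← cfc_mul _ _ σ hcont Real.continuous_sqrt.continuousOn]
  calc cfc (fun x : ℝ => (Real.sqrt x)⁻¹ * Real.sqrt x) σ
      = cfc (fun _ : ℝ => (1 : ℝ)) σ := by
        apply cfc_congr
        intro x hx
        exact inv_mul_cancel₀ (Real.sqrt_pos.mpr (posDef_spectrum_pos hσ x hx)).ne'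
    _ = 1 := cfc_const_one ℝ σ

/-- Let `E_τ` be the trace-preserving (HS self-adjoint) conditional
expectation onto `M`, `σ` a full-rank state, `A_σ` as above, `R_σ` the Petz recovery map,
and `E_σ` the conditional expectation onto the fixed-point algebra of `A_σ` (characterized by
`E_σ X = X ↔ A_σ X = X`, with range in the fixed points). Then for any density matrix `ρ`:
`ρ = R_σ(E_τ(ρ))` if and only if `ρ = E_{σ*}(ρ)`, where `E_{σ*} = Γ_σ ∘ E_σ ∘ Γ_σ^{-1}`. -/
theorem petz_recovery_iff_fixed_point
    {d : ℕ} (Malg : StarSubalgebra ℂ (Matrix (Fin d) (Fin d) ℂ))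
    (σ : Matrix (Fin d) (Fin d) ℂ) (hσ : σ.PosDef) (hσtr : σ.trace = 1)
    (Eτ : Matrix (Fin d) (Fin d) ℂ →ₗ[ℂ] Matrix (Fin d) (Fin d) ℂ)
    (hrange : ∀ X, Eτ X ∈ Malg) (hid : ∀ X ∈ Malg, Eτ X = X)
    (hunital : Eτ 1 = 1)
    (hpos : ∀ X : Matrix (Fin d) (Fin d) ℂ, X.PosSemidef → (Eτ X).PosSemidef)
    (hsa : ∀ X Y, (Eτ X * Y).trace = (X * Eτ Y).trace)
    (Eσ : Matrix (Fin d) (Fin d) ℂ →ₗ[ℂ] Matrix (Fin d) (Fin d) ℂ)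
    (hEσ1 : ∀ X, Asig Eτ σ (Eσ X) = Eσ X)
    (hEσ2 : ∀ X, Asig Eτ σ X = X → Eσ X = X)
    (ρ : Matrix (Fin d) (Fin d) ℂ) (hρ : ρ.PosSemidef) (hρtr : ρ.trace = 1) :
    ρ = Rsig Eτ σ (Eτ ρ)
      ↔ ρ = matSqrt σ * Eσ (matInvSqrt σ * ρ * matInvSqrt σ) * matSqrt σ := by
  have hst : matSqrt σ * matInvSqrt σ = 1 := sqrt_mul_invSqrt hσ
  have hts : matInvSqrt σ * matSqrt σ = 1 := invSqrt_mul_sqrt hσ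
  set s := matSqrt σ with hs
  set t := matInvSqrt σ with ht
  set X := t * ρ * t with hXdef
  -- s * X * s = ρ
  have hX : s * X * s = ρ := by
    have : s * (t * ρ * t) * s = (s * t) * ρ * (t * s) := by
      simp [mul_assoc]
    rw [hXdef, this, hst, hts, one_mul, mul_one]
  -- cancellation
  have cancel : ∀ A B : Matrix (Fin d) (Fin d) ℂ, s * A * s = s * B * s → A = B := by
    intro A B h
    have key : ∀ C : Matrix (Fin d) (Fin d) ℂ, t * (s * C * s) * t = C := by
      intro C
      have : t * (s * C * s) * t = (t * s) * C * (s * t) := by simp [mul_assoc]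
      rw [this, hts, hst, one_mul, mul_one]
    calc A = t * (s * A * s) * t := (key A).symm
      _ = t * (s * B * s) * t := by rw [h]
      _ = B := key B
  -- Rsig in terms of Asig
  have hR : Rsig Eτ σ (Eτ ρ) = s * Asig Eτ σ X * s := by
    rw [Rsig, Asig, hX]
  constructor
  · intro h
    have h1 : s * X * s = s * Asig Eτ σ X * s := by rw [hX, h, hR]
    have h2 : Asig Eτ σ X = X := (cancel _ _ h1).symm
    have h3 : Eσ X = X := hEσ2 X h2
    rw [h3]
    exact hX.symm
  · intro h
    have h2 : Eσ X = X := cancel _ _ (h.symm.trans hX.symm)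
    have h4 : Asig Eτ σ X = X := by
      have := hEσ1 X
      rwa [h2] at this
    rw [hR, h4]
    exact hX.symm
end
end
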